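/- arXiv:2106.00106 — 3 statements merged into one kernel-verified Lean document; each statement's English description precedes it below -/
import Mathlib

section
/- Consider the Koopman operator K_{F_π} on the Fock space F²(ℂ) given by composition with F_π(z) = −z. The function φ(z) = e^{z²/4} is an eigenfunction of K_{F_π} with eigenvalue 1 (since φ is even and φ ∈ F²(ℂ)), but the product φ·φ = e^{z²/2} is not an element of F²(ℂ). Hence the eigenfunctions of a Koopman operator over an RKHS need not be closed under multiplication. -/
/-!
`exp (z² / r)` has coefficient `1 / (r ^ k * k!)` at `z ^ (2k)` and none at odd powers, so its
Fock series is `∑ (2k)! / (‖r‖ ^ (2k) * (k!)²) = ∑ C(2k, k) / (‖r‖²) ^ k`. As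
`4 ^ k / (2k) ≤ C(2k, k) ≤ 4 ^ k`, this converges for `r = 4` (that is `φ`) and diverges like the
harmonic series for `r = 2` (that is `φ² = exp (z² / 2)`). Being even, `φ` is fixed by `K_{F_π}`.
-/

open scoped Nat

noncomputable def gaussianCoeff (r : ℂ) (m : ℕ) : ℂ :=
  if m % 2 = 0 then 1 / (r ^ (m / 2) * (Nat.factorial (m / 2) : ℂ)) else 0

lemma gaussianCoeff_two_mul (r : ℂ) (k : ℕ) : gaussianCoeff r (2 * k) = 1 / (r ^ k * k !) := by
  simp [gaussianCoeff]

lemma gaussianCoeff_eq_zero_of_notMem_range (r : ℂ) {m : ℕ}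
    (hm : m ∉ Set.range (2 * ·)) : gaussianCoeff r m = 0 := by
  rw [gaussianCoeff, if_neg]
  exact fun h => hm ⟨m / 2, show 2 * (m / 2) = m by omega⟩

lemma tsum_gaussianCoeff_mul_pow (r z : ℂ) :
    ∑' m, gaussianCoeff r m * z ^ m = Complex.exp (z ^ 2 / r) := by
  rw [Complex.exp_eq_exp_ℂ, NormedSpace.exp_eq_tsum_div,
    ← (mul_right_injective₀ two_ne_zero).tsum_eq <| Function.support_subset_iff'.2 fun m hm => by
      simp [gaussianCoeff_eq_zero_of_notMem_range r hm]]
  refine tsum_congr fun k => ?_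
  rw [gaussianCoeff_two_mul, pow_mul, div_pow]
  ring

lemma norm_sq_gaussianCoeff_two_mul_mul_factorial (r : ℂ) (k : ℕ) :
    ‖gaussianCoeff r (2 * k)‖ ^ 2 * ((2 * k)! : ℝ) = k.centralBinom / (‖r‖ ^ 2) ^ k := by
  rw [Nat.centralBinom_eq_two_mul_choose, Nat.cast_choose ℝ (by omega),
    show 2 * k - k = k by omega, gaussianCoeff_two_mul]
  simp only [one_div, norm_inv, norm_mul, norm_pow, Complex.norm_natCast]
  ring

lemma summable_fock_gaussianCoeff_iff (r : ℂ) :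
    Summable (fun m => ‖gaussianCoeff r m‖ ^ 2 * (m ! : ℝ)) ↔
      Summable (fun k => (k.centralBinom : ℝ) / (‖r‖ ^ 2) ^ k) := by
  rw [← (mul_right_injective₀ two_ne_zero).summable_iff fun m hm => by
    simp [gaussianCoeff_eq_zero_of_notMem_range r hm]]
  simp only [Function.comp_def, norm_sq_gaussianCoeff_two_mul_mul_factorial]

lemma summable_centralBinom_div_pow {c : ℝ} (hc : 4 < c) :
    Summable fun k => (k.centralBinom : ℝ) / c ^ k := by
  have hratio : 4 / c < 1 := (div_lt_one (by positivity)).2 hc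
  refine (summable_geometric_of_lt_one (by positivity) hratio).of_nonneg_of_le
    (fun k => by positivity) fun k => ?_
  rw [div_pow]
  gcongr
  exact_mod_cast Nat.centralBinom_le_four_pow k

lemma not_summable_centralBinom_div_four_pow :
    ¬ Summable fun k => (k.centralBinom : ℝ) / 4 ^ k := by
  intro h
  refine Real.not_summable_one_div_natCast ?_
  refine (h.mul_left 2).of_nonneg_of_le (fun k => by positivity) fun k => ?_
  rcases Nat.eq_zero_or_pos k with rfl | hk
  · simp
  rw [mul_div_assoc', div_le_div_iff₀ (by positivity) (by positivity), one_mul]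
  have hlower := Nat.four_pow_le_two_mul_self_mul_centralBinom k hk
  exact_mod_cast (by linarith : 4 ^ k ≤ 2 * k.centralBinom * k)

/-- No lattice of eigenfunctions: for the Koopman operator `K_{F_π} g(z) = g(-z)` on
the Fock space `F²(ℂ)`, the function `φ(z) = e^{z²/4}` (coefficients
`a_{2m} = 1/(4^m m!)`) is an eigenfunction with eigenvalue `1`: `φ ∈ F²(ℂ)` and
`φ(-z) = 1 * φ(z)`.  But the product `φ·φ = e^{z²/2}` (coefficients
`b_{2m} = 1/(2^m m!)`) is not in `F²(ℂ)`, since its coefficient series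
`Σ |bₘ|² m! = Σ (2m)!/(4^m (m!)²)` diverges. -/
theorem eigenfunctions_not_closed_under_multiplication :
    let a : ℕ → ℂ := fun m =>
      if m % 2 = 0 then 1 / ((4 : ℂ) ^ (m / 2) * (Nat.factorial (m / 2) : ℂ)) else 0
    let b : ℕ → ℂ := fun m =>
      if m % 2 = 0 then 1 / ((2 : ℂ) ^ (m / 2) * (Nat.factorial (m / 2) : ℂ)) else 0
    -- φ ∈ F²(ℂ)
    (Summable fun m : ℕ => ‖a m‖ ^ 2 * (Nat.factorial m : ℝ)) ∧
    -- φ is an eigenfunction of K_{F_π} with eigenvalue 1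
    (∀ z : ℂ, ∑' m : ℕ, a m * (-z) ^ m = 1 * ∑' m : ℕ, a m * z ^ m) ∧
    -- φ·φ = e^{z²/2}
    (∀ z : ℂ, (∑' m : ℕ, a m * z ^ m) * (∑' m : ℕ, a m * z ^ m)
        = ∑' m : ℕ, b m * z ^ m) ∧
    -- but φ·φ ∉ F²(ℂ)
    ¬ (Summable fun m : ℕ => ‖b m‖ ^ 2 * (Nat.factorial m : ℝ)) := by
  intro a b
  simp only [show a = gaussianCoeff 4 from rfl, show b = gaussianCoeff 2 from rfl,
    summable_fock_gaussianCoeff_iff, tsum_gaussianCoeff_mul_pow]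
  refine ⟨?_, fun z => ?_, fun z => ?_, ?_⟩
  · norm_num
    exact summable_centralBinom_div_pow (by norm_num)
  · rw [neg_sq, one_mul]
  · rw [← Complex.exp_add]
    ring_nf
  · norm_num
    exact not_summable_centralBinom_div_four_pow
end

section
/- Suppose the Koopman operator K_F is bounded on the native RKHS of the Gaussian RBF kernel K(x,y) = exp(−‖x−y‖²) over ℝⁿ, with symbol F : ℝⁿ → ℝⁿ. Then each component of F is real analytic on ℝⁿ. -/
/-!
Evaluating `K_F` on the kernel section at `y` shows that `x ↦ exp (-‖F x - y‖²)` lies in the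
native space, hence is analytic; taking logarithms, so is `x ↦ ‖F x - y‖²` for every `y`.
The coordinate `F x j` is then the analytic combination `(‖F x‖² - ‖F x - e_j‖² + 1) / 2`.
-/

open Real

lemma AnalyticOnNhd.of_exp {E : Type*} [NormedAddCommGroup E] [NormedSpace ℝ E]
    {f : E → ℝ} {s : Set E} (hf : AnalyticOnNhd ℝ (fun x => exp (f x)) s) :
    AnalyticOnNhd ℝ f s := by
  simpa [Function.comp_def] using analyticOnNhd_log.comp hf fun x _ => exp_pos (f x)

lemma EuclideanSpace.norm_sub_single_one_sq {ι : Type*} [Fintype ι] [DecidableEq ι]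
    (v : EuclideanSpace ℝ ι) (j : ι) :
    ‖v - EuclideanSpace.single j 1‖ ^ 2 = ‖v‖ ^ 2 - 2 * v j + 1 := by
  rw [norm_sub_sq_real, EuclideanSpace.inner_single_right]
  simp

lemma AnalyticOnNhd.apply_of_norm_sub_sq {E ι : Type*} [NormedAddCommGroup E]
    [NormedSpace ℝ E] [Fintype ι] [DecidableEq ι] {F : E → EuclideanSpace ℝ ι} {s : Set E}
    (hF : ∀ y, AnalyticOnNhd ℝ (fun x => ‖F x - y‖ ^ 2) s) (j : ι) :
    AnalyticOnNhd ℝ (fun x => F x j) s := by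
  have hcoord : (fun x => F x j) =
      fun x => (‖F x - 0‖ ^ 2 - ‖F x - EuclideanSpace.single j 1‖ ^ 2 + 1) / 2 := by
    funext x
    rw [sub_zero, EuclideanSpace.norm_sub_single_one_sq]
    ring
  rw [hcoord]
  exact (((hF 0).sub (hF _)).add analyticOnNhd_const).div_const

/-- The native space is modelled abstractly: `g : H` represents the function `x ↦ ⟪k x, g⟫`,
and `T` is the bounded Koopman operator `g ↦ g ∘ F`. -/
theorem gaussian_bounded_koopman_symbol_analytic
    {n : ℕ} {H : Type*} [NormedAddCommGroup H] [InnerProductSpace ℝ H]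
    (k : EuclideanSpace ℝ (Fin n) → H)
    (hkernel : ∀ x y : EuclideanSpace ℝ (Fin n),
      @inner ℝ _ _ (k y) (k x) = Real.exp (-‖x - y‖ ^ 2))
    (hanalytic : ∀ g : H,
      AnalyticOnNhd ℝ (fun x : EuclideanSpace ℝ (Fin n) => @inner ℝ _ _ (k x) g)
        Set.univ)
    (F : EuclideanSpace ℝ (Fin n) → EuclideanSpace ℝ (Fin n))
    (T : H →L[ℝ] H)
    (hT : ∀ (g : H) (x : EuclideanSpace ℝ (Fin n)),
      @inner ℝ _ _ (k x) (T g) = @inner ℝ _ _ (k (F x)) g) :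
    ∀ j : Fin n, AnalyticOnNhd ℝ (fun x => F x j) Set.univ := by
  have hsection : ∀ y,
      (fun x => exp (-‖F x - y‖ ^ 2)) = fun x => @inner ℝ _ _ (k x) (T (k y)) := by
    intro y
    funext x
    rw [hT, real_inner_comm, hkernel]
  have hnorm_sq : ∀ y, AnalyticOnNhd ℝ (fun x => ‖F x - y‖ ^ 2) Set.univ := by
    intro y
    have hexp := hanalytic (T (k y))
    rw [← hsection y] at hexp
    simpa [Pi.neg_def] using hexp.of_exp.neg
  exact AnalyticOnNhd.apply_of_norm_sub_sq hnorm_sq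
end

section
/- Let F : ℂ → ℂ be entire and suppose the composition operator K_F g = g ∘ F is bounded on the complexified Gaussian RKHS H_G over ℂ (kernel K_G(z,w) = exp(−(z−w̄)²/2)). Then F is affine: F(z) = az + b with a, b ∈ ℂ. -/
/-!
Boundedness of `K_F` gives `K_F* k_z = k_{F z}` for the kernel functions `k_z`, hence
`‖k_{F z}‖ ≤ ‖K_F‖ ‖k_z‖`. As `‖k_w‖ = exp((Im w)²)`, taking logarithms shows that `Im F`
grows at most linearly. By Borel–Carathéodory `F` itself then grows at most linearly, so `F'`
is bounded by Cauchy's estimate and constant by Liouville's theorem.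
-/

open Complex ComplexConjugate Metric

section KernelNorm

variable {𝕜 E F : Type*} [RCLike 𝕜] [NormedAddCommGroup E] [InnerProductSpace 𝕜 E]
  [NormedAddCommGroup F] [InnerProductSpace 𝕜 F]

/-- `h` says `x = T† y`, phrased without the adjoint, which would require completeness. -/
theorem norm_le_opNorm_mul_norm_of_inner_apply_eq {T : E →L[𝕜] F} {x : E} {y : F}
    (h : ∀ g, inner 𝕜 y (T g) = inner 𝕜 x g) : ‖x‖ ≤ ‖T‖ * ‖y‖ := by
  rcases (norm_nonneg x).eq_or_lt with hx | hx
  · rw [← hx]; positivity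
  refine le_of_mul_le_mul_right ?_ hx
  calc ‖x‖ * ‖x‖ = RCLike.re (inner 𝕜 y (T x)) := by rw [h, inner_self_eq_norm_mul_norm]
    _ ≤ ‖y‖ * ‖T x‖ := re_inner_le_norm _ _
    _ ≤ ‖y‖ * (‖T‖ * ‖x‖) := by gcongr; exact T.le_opNorm x
    _ = ‖T‖ * ‖y‖ * ‖x‖ := by ring

end KernelNorm

theorem Complex.exp_neg_sub_conj_sq_div_two (w : ℂ) :
    exp (-(w - conj w) ^ 2 / 2) = Real.exp (2 * w.im ^ 2) := by
  rw [sub_conj, ofReal_exp]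
  congr 1
  push_cast
  ring_nf
  rw [I_sq]
  ring

theorem norm_eq_exp_im_sq_of_inner_eq_gaussian {H : Type*} [NormedAddCommGroup H]
    [InnerProductSpace ℂ H] {k : ℂ → H}
    (hkernel : ∀ z w : ℂ, inner ℂ (k w) (k z) = exp (-(z - conj w) ^ 2 / 2)) (w : ℂ) :
    ‖k w‖ = Real.exp (w.im ^ 2) := by
  have hsq : ‖k w‖ ^ 2 = Real.exp (w.im ^ 2) ^ 2 := by
    have := inner_self_eq_norm_sq_to_K (𝕜 := ℂ) (k w)
    rw [hkernel, exp_neg_sub_conj_sq_div_two] at this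
    rw [← Real.exp_nat_mul]
    exact_mod_cast (RCLike.ofReal_injective (K := ℂ) (by push_cast; exact this.symm))
  exact (pow_left_inj₀ (norm_nonneg _) (Real.exp_nonneg _) two_ne_zero).mp hsq

theorem Real.le_sqrt_abs_log_add_abs_of_exp_sq_le {a b c : ℝ}
    (h : exp (a ^ 2) ≤ c * exp (b ^ 2)) : a ≤ √|log c| + |b| := by
  have hc : 0 < c := pos_of_mul_pos_left ((exp_pos _).trans_le h) (exp_nonneg _)
  have hsq : a ^ 2 ≤ log c + b ^ 2 := by
    rwa [← exp_le_exp, exp_add, exp_log hc]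
  have hs := sq_sqrt (abs_nonneg (log c))
  nlinarith [sqrt_nonneg |log c|, abs_nonneg b, sq_abs b, le_abs_self (log c)]

namespace Complex

variable {f : ℂ → ℂ}

/-- Borel–Carathéodory on the ball of radius `2‖z‖ + 1`. -/
theorem exists_norm_le_linear_of_re_le_linear (hf : Differentiable ℂ f) {A B : ℝ}
    (hre : ∀ z, (f z).re ≤ A + B * ‖z‖) : ∃ C D : ℝ, ∀ z, ‖f z‖ ≤ C + D * ‖z‖ := by
  refine ⟨2 * (|A| + |B| + 1) + 3 * ‖f 0‖, 4 * |B|, fun z => ?_⟩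
  set R := 2 * ‖z‖ + 1 with hR
  set M := |A| + |B| * R + 1 with hMdef
  have hM : 0 < M := by positivity
  have hz : z ∈ ball (0 : ℂ) R := by rw [mem_ball_zero_iff]; linarith [norm_nonneg z]
  have hmaps : Set.MapsTo f (ball 0 R) {w | w.re ≤ M} := fun w hw => by
    have hw : ‖w‖ < R := mem_ball_zero_iff.mp hw
    have := hre w
    simp only [Set.mem_ofPred_eq]
    nlinarith [le_abs_self A, le_abs_self B, abs_nonneg B, norm_nonneg w]
  have hbc := borelCaratheodory hM hf.differentiableOn hmaps (by positivity) hz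
  have hden : R - ‖z‖ = ‖z‖ + 1 := by ring
  rw [hden, ← add_div, le_div_iff₀ (by positivity)] at hbc
  rw [hMdef, hR] at hbc
  nlinarith [norm_nonneg z, norm_nonneg (f 0), abs_nonneg A, abs_nonneg B]

theorem norm_deriv_le_of_norm_le_linear (hf : Differentiable ℂ f) {C D : ℝ}
    (h : ∀ z, ‖f z‖ ≤ C + D * ‖z‖) (c : ℂ) : ‖deriv f c‖ ≤ |C| + 2 * |D| := by
  have hR : 0 < ‖c‖ + 1 := by positivity
  have hsphere : ∀ z ∈ sphere c (‖c‖ + 1), ‖f z‖ ≤ |C| + |D| * (2 * ‖c‖ + 1) := fun z hz => by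
    have hz : ‖z - c‖ = ‖c‖ + 1 := mem_sphere_iff_norm.mp hz
    have : ‖z‖ ≤ 2 * ‖c‖ + 1 := by linarith [norm_le_norm_sub_add z c]
    nlinarith [h z, le_abs_self C, le_abs_self D, abs_nonneg D, neg_abs_le D, norm_nonneg z]
  calc ‖deriv f c‖ ≤ (|C| + |D| * (2 * ‖c‖ + 1)) / (‖c‖ + 1) :=
        norm_deriv_le_of_forall_mem_sphere_norm_le hR hf.diffContOnCl hsphere
    _ ≤ |C| + 2 * |D| := by
        rw [div_le_iff₀ hR]; nlinarith [abs_nonneg C, abs_nonneg D, norm_nonneg c]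

theorem eq_mul_add_of_deriv_eq_const (hf : Differentiable ℂ f) {a : ℂ}
    (h : ∀ z, deriv f z = a) (z : ℂ) : f z = a * z + f 0 := by
  have hg : Differentiable ℂ (fun z => f z - a * z) := by fun_prop
  have hg' : ∀ z, deriv (fun z => f z - a * z) z = 0 := fun z => by
    rw [((hf z).hasDerivAt.fun_sub ((hasDerivAt_id' z).const_mul a)).deriv, h]; ring
  simpa [sub_eq_iff_eq_add'] using is_const_of_deriv_eq_zero hg hg' z 0

theorem exists_eq_mul_add_of_norm_le_linear (hf : Differentiable ℂ f) {C D : ℝ}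
    (h : ∀ z, ‖f z‖ ≤ C + D * ‖z‖) : ∃ a b : ℂ, ∀ z, f z = a * z + b := by
  have hbdd : Bornology.IsBounded (Set.range (deriv f)) :=
    isBounded_iff_forall_norm_le.mpr ⟨_, Set.forall_mem_range.mpr
      (norm_deriv_le_of_norm_le_linear hf h)⟩
  obtain ⟨a, ha⟩ := hf.deriv.exists_const_forall_eq_of_bounded hbdd
  exact ⟨a, f 0, eq_mul_add_of_deriv_eq_const hf ha⟩

end Complex

/-- If `F : ℂ → ℂ` is entire and the composition operator `K_F g = g ∘ F` is bounded
on the complexified Gaussian RKHS `H_G` over `ℂ` (kernel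
`K_G(z,w) = exp(−(z − w̄)²/2)`), then `F` is affine: `F(z) = a z + b`. The space is
modeled abstractly: `H` is a complex Hilbert space with kernel family `k : ℂ → H`
satisfying `⟪k w, k z⟫ = K_G(z,w)`, elements `g : H` represent functions
`z ↦ ⟪k z, g⟫`, and boundedness of `K_F` is the existence of a continuous linear
`T : H →L[ℂ] H` acting as composition with `F`. -/
theorem gaussian_bounded_koopman_affine
    {H : Type*} [NormedAddCommGroup H] [InnerProductSpace ℂ H]
    (k : ℂ → H)
    (hkernel : ∀ z w : ℂ,
      @inner ℂ _ _ (k w) (k z) = Complex.exp (-(z - (starRingEnd ℂ) w) ^ 2 / 2))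
    (F : ℂ → ℂ) (hF : Differentiable ℂ F)
    (T : H →L[ℂ] H)
    (hT : ∀ (g : H) (z : ℂ), @inner ℂ _ _ (k z) (T g) = @inner ℂ _ _ (k (F z)) g) :
    ∃ a b : ℂ, ∀ z : ℂ, F z = a * z + b := by
  have hnorm := norm_eq_exp_im_sq_of_inner_eq_gaussian hkernel
  have him_le : ∀ z, (-I * F z).re ≤ √|Real.log ‖T‖| + 1 * ‖z‖ := fun z => by
    have h := norm_le_opNorm_mul_norm_of_inner_apply_eq (hT · z)
    rw [hnorm, hnorm] at h
    simpa using (Real.le_sqrt_abs_log_add_abs_of_exp_sq_le h).trans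
      (add_le_add_right (abs_im_le_norm z) _)
  obtain ⟨C, D, hgrowth⟩ := exists_norm_le_linear_of_re_le_linear (by fun_prop) him_le
  exact exists_eq_mul_add_of_norm_le_linear hF fun z => by
    simpa using hgrowth z
end
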